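/- Let d ≥ 1 and z ≥ 1 be integers, and let A_n, B_n, C_n be the convergent sequences of the periodic bifurcating continued fraction [{z, 2z/d, repeat(3dz/(z³+d²), 3z, 3z/d)}, {0, −z²/d, repeat(−3z²/(z³+d²), −3dz²/(z³+d²), −3z²/d)}]. Then for every n ≥ 0, one has μ_{n+1}(3,2,d,z) ≠ 0, C_n ≠ 0, and A_n/C_n = μ_{n+1}(3,0,d,z)/μ_{n+1}(3,2,d,z) and B_n/C_n = μ_{n+1}(3,1,d,z)/μ_{n+1}(3,2,d,z). -/

import Mathlib

/-!
By Pascal's rule the Rédei polynomials `μ_n(3,k)` form the cyclic system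
`μ_{n+1}(3,0) = z μ_n(3,0) + d μ_n(3,1)`, `μ_{n+1}(3,1) = z μ_n(3,1) + d μ_n(3,2)`,
`μ_{n+1}(3,2) = z μ_n(3,2) + μ_n(3,0)`, so each of them satisfies the linear recurrence with
characteristic polynomial `(X - z)³ - d²`. Multiplying the convergents by
`K_n = d^[n ≡ 1 mod 3] (z³ + d²)^⌊(n+1)/3⌋` turns the three-periodic recurrence of the continued
fraction into this same constant-coefficient recurrence, so `K_n A_n`, `K_n B_n`, `K_n C_n` are
`μ_{n+1}(3,0)`, `μ_{n+1}(3,1)`, `μ_{n+1}(3,2)`, as the first three values agree.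
-/

/-- The generalized Rédei polynomials
`μ_n(e,k,d,z) = Σ_{h=0}^{n} C(n, e·h − k) · d^{(e−1)h − k} · z^{n − e·h + k}`,
where the binomial coefficient is `0` when `e·h − k < 0` or `e·h − k > n`. -/
def mu (e k : ℕ) (d z : ℤ) (n : ℕ) : ℤ :=
  ∑ h ∈ Finset.range (n + 1),
    if k ≤ e * h then
      (n.choose (e * h - k) : ℤ) * d ^ ((e - 1) * h - k) * z ^ (n + k - e * h)
    else 0

/-- The convergent sequences of the bifurcating continued fraction
`[{p_0,p_1,...},{q_0,q_1,...}]`, shifted by two: `bcf p q x0 x1 x2 m = X_{m-2}`,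
where `X_{-2} = x0`, `X_{-1} = x1`, `X_0 = x2` and
`X_n = p_n X_{n-1} + q_n X_{n-2} + X_{n-3}` for `n ≥ 1`.
So `A_n = bcf p q 0 1 (p 0) (n+2)`, `B_n = bcf p q 1 0 (q 0) (n+2)`,
`C_n = bcf p q 0 0 1 (n+2)`. -/
def bcf (p q : ℕ → ℚ) (x0 x1 x2 : ℚ) : ℕ → ℚ
  | 0 => x0
  | 1 => x1
  | 2 => x2
  | n + 3 =>
      p (n + 1) * bcf p q x0 x1 x2 (n + 2) + q (n + 1) * bcf p q x0 x1 x2 (n + 1)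
        + bcf p q x0 x1 x2 n

open Finset

def muTerm (e k : ℕ) (d z : ℤ) (n h : ℕ) : ℤ :=
  if k ≤ e * h then (n.choose (e * h - k) : ℤ) * d ^ ((e - 1) * h - k) * z ^ (n + k - e * h)
  else 0

lemma mu_eq_sum_muTerm (e k : ℕ) (d z : ℤ) (n : ℕ) :
    mu e k d z n = ∑ h ∈ range (n + 1), muTerm e k d z n h := rfl

lemma mu_eq_sum_range_add_two {e k : ℕ} (hk : k < e) (d z : ℤ) (n : ℕ) :
    mu e k d z n = ∑ h ∈ range (n + 2), muTerm e k d z n h := by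
  have hn : n ≤ e * n := Nat.le_mul_of_pos_left n (by omega)
  rw [sum_range_succ, muTerm, Nat.choose_eq_zero_of_lt (by rw [mul_add]; omega)]
  simp [mu_eq_sum_muTerm]

lemma choose_succ_succ_mul_pow {R : Type*} [CommSemiring R] (z : R) (n j : ℕ) :
    ((n + 1).choose (j + 1) : R) * z ^ (n - j)
      = z * ((n.choose (j + 1) : R) * z ^ (n - (j + 1))) + (n.choose j : R) * z ^ (n - j) := by
  rw [Nat.choose_succ_succ]
  rcases le_or_gt (j + 1) n with hjn | hjn
  · rw [show n - j = n - (j + 1) + 1 by omega, pow_succ]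
    push_cast
    ring
  · rw [Nat.choose_eq_zero_of_lt hjn]
    push_cast
    ring

lemma muTerm_succ {e k : ℕ} (hk : k + 1 < e) (d z : ℤ) (n h : ℕ) :
    muTerm e k d z (n + 1) h = z * muTerm e k d z n h + d * muTerm e (k + 1) d z n h := by
  unfold muTerm
  rcases Nat.eq_zero_or_pos h with rfl | hh
  · rcases Nat.eq_zero_or_pos k with rfl | hk0
    · simp [pow_succ, mul_comm]
    · simp [show ¬ k ≤ 0 by omega]
  have he : e ≤ e * h := Nat.le_mul_of_pos_right e hh
  have he' : e - 1 ≤ (e - 1) * h := Nat.le_mul_of_pos_right _ hh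
  have hsub : (e - 1) * h = e * h - h := Nat.sub_one_mul e h
  obtain ⟨j, hj⟩ : ∃ j, e * h - k = j + 1 := ⟨e * h - (k + 1), by omega⟩
  obtain ⟨a, ha⟩ : ∃ a, (e - 1) * h - k = a + 1 := ⟨(e - 1) * h - (k + 1), by omega⟩
  rw [if_pos (by omega), if_pos (by omega), if_pos (by omega), hj, ha,
    show e * h - (k + 1) = j by omega, show (e - 1) * h - (k + 1) = a by omega,
    show n + 1 + k - e * h = n - j by omega, show n + k - e * h = n - (j + 1) by omega,
    show n + (k + 1) - e * h = n - j by omega]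
  linear_combination d ^ (a + 1) * choose_succ_succ_mul_pow z n j

lemma muTerm_sub_one_succ {e : ℕ} (he : 1 ≤ e) (d z : ℤ) (n h : ℕ) :
    muTerm e (e - 1) d z (n + 1) (h + 1)
      = z * muTerm e (e - 1) d z n (h + 1) + muTerm e 0 d z n h := by
  unfold muTerm
  have hsub : (e - 1) * (h + 1) = (e - 1) * h + (e - 1) := by ring
  rw [if_pos (by rw [mul_add]; omega), if_pos (by rw [mul_add]; omega), if_pos (Nat.zero_le _),
    show e * (h + 1) - (e - 1) = e * h + 1 by rw [mul_add]; omega, hsub,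
    show (e - 1) * h + (e - 1) - (e - 1) = (e - 1) * h by omega,
    show n + 1 + (e - 1) - e * (h + 1) = n - e * h by rw [mul_add]; omega,
    show n + (e - 1) - e * (h + 1) = n - (e * h + 1) by rw [mul_add]; omega,
    Nat.sub_zero, Nat.sub_zero, Nat.add_zero]
  linear_combination d ^ ((e - 1) * h) * choose_succ_succ_mul_pow z n (e * h)

lemma muTerm_sub_one_zero {e : ℕ} (he : 2 ≤ e) (d z : ℤ) (n : ℕ) :
    muTerm e (e - 1) d z n 0 = 0 := by
  rw [muTerm, if_neg (by omega)]

lemma mu_succ {e k : ℕ} (hk : k + 1 < e) (d z : ℤ) (n : ℕ) :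
    mu e k d z (n + 1) = z * mu e k d z n + d * mu e (k + 1) d z n := by
  rw [mu_eq_sum_muTerm e k d z (n + 1), mu_eq_sum_range_add_two (by omega) d z n,
    mu_eq_sum_range_add_two hk d z n, mul_sum, mul_sum, ← sum_add_distrib]
  exact sum_congr rfl fun h _ => muTerm_succ hk d z n h

lemma mu_sub_one_succ {e : ℕ} (he : 2 ≤ e) (d z : ℤ) (n : ℕ) :
    mu e (e - 1) d z (n + 1) = z * mu e (e - 1) d z n + mu e 0 d z n := by
  rw [mu_eq_sum_muTerm e (e - 1) d z (n + 1), sum_range_succ', muTerm_sub_one_zero he, add_zero,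
    mu_eq_sum_range_add_two (by omega) d z n, sum_range_succ' (muTerm e (e - 1) d z n),
    muTerm_sub_one_zero he, add_zero, mul_sum, mu_eq_sum_muTerm e 0, ← sum_add_distrib]
  exact sum_congr rfl fun h _ => muTerm_sub_one_succ (by omega) d z n h

lemma mu_sub_one_pos {e : ℕ} (he : 1 ≤ e) {d z : ℤ} (hd : 0 ≤ d) (hz : 0 < z) (n : ℕ) :
    0 < mu e (e - 1) d z (n + 1) := by
  rw [mu_eq_sum_muTerm]
  refine sum_pos' (fun h _ => ?_) ⟨1, mem_range.2 (by omega), ?_⟩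
  · unfold muTerm
    split_ifs <;> positivity
  · rw [muTerm, if_pos (by omega), show e * 1 - (e - 1) = 1 by omega,
      show (e - 1) * 1 - (e - 1) = 0 by omega, show n + 1 + (e - 1) - e * 1 = n by omega]
    simp only [Nat.choose_one_right, pow_zero, mul_one]
    positivity

-- With `S` the shift, `(S - z) u = α v`, `(S - z) v = β w`, `(S - z) w = γ u`,
-- hence `(S - z)³ u = αβγ u`.
lemma add_three_of_cyclic {R : Type*} [CommRing R] {u v w : ℕ → R} {z α β γ : R}
    (hu : ∀ n, u (n + 1) = z * u n + α * v n) (hv : ∀ n, v (n + 1) = z * v n + β * w n)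
    (hw : ∀ n, w (n + 1) = z * w n + γ * u n) (n : ℕ) :
    u (n + 3) = 3 * z * u (n + 2) - 3 * z ^ 2 * u (n + 1) + (z ^ 3 + α * β * γ) * u n := by
  linear_combination hu (n + 2) - 2 * z * hu (n + 1) + z ^ 2 * hu n + α * hv (n + 1)
    - α * z * hv n + α * β * hw n

lemma mu_three_add_three {k : ℕ} (hk : k < 3) (d z : ℤ) (n : ℕ) :
    mu 3 k d z (n + 3) = 3 * z * mu 3 k d z (n + 2) - 3 * z ^ 2 * mu 3 k d z (n + 1)
      + (z ^ 3 + d ^ 2) * mu 3 k d z n := by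
  have h0 : ∀ n, mu 3 0 d z (n + 1) = z * mu 3 0 d z n + d * mu 3 1 d z n :=
    mu_succ (by norm_num) d z
  have h1 : ∀ n, mu 3 1 d z (n + 1) = z * mu 3 1 d z n + d * mu 3 2 d z n :=
    mu_succ (by norm_num) d z
  have h2 : ∀ n, mu 3 2 d z (n + 1) = z * mu 3 2 d z n + 1 * mu 3 0 d z n := fun n => by
    rw [one_mul]; exact mu_sub_one_succ (e := 3) (by norm_num) d z n
  interval_cases k
  · linear_combination add_three_of_cyclic h0 h1 h2 n
  · linear_combination add_three_of_cyclic h1 h2 h0 n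
  · linear_combination add_three_of_cyclic h2 h0 h1 n

def cubicRecurrence {R : Type*} [CommSemiring R] (a b c : R) : LinearRecurrence R :=
  ⟨3, ![c, b, a]⟩

section CubicRecurrence

variable {R : Type*} [CommSemiring R] {a b c : R} {u v : ℕ → R}

lemma cubicRecurrence_isSolution_iff :
    (cubicRecurrence a b c).IsSolution u ↔
      ∀ n, u (n + 3) = a * u (n + 2) + b * u (n + 1) + c * u n := by
  refine forall_congr' fun n => ?_
  show u (n + 3) = ∑ i : Fin 3, ![c, b, a] i * u (n + i) ↔ _
  simp only [Fin.sum_univ_three, Fin.isValue, Matrix.cons_val_zero, Matrix.cons_val_one,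
    Matrix.cons_val, Fin.coe_ofNat_eq_mod, Nat.zero_mod, Nat.one_mod, Nat.mod_succ, add_zero]
  constructor <;> intro h <;> rw [h] <;> ring

lemma cubicRecurrence_eq_of_init (hu : (cubicRecurrence a b c).IsSolution u)
    (hv : (cubicRecurrence a b c).IsSolution v) (h0 : u 0 = v 0) (h1 : u 1 = v 1)
    (h2 : u 2 = v 2) : u = v := by
  refine (LinearRecurrence.eq_iff_eqOn_range_order _ u v hu hv).2 fun n hn => ?_
  simp only [cubicRecurrence, coe_range, Set.mem_Iio] at hn
  interval_cases n <;> assumption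

end CubicRecurrence

lemma cubicRecurrence_isSolution_mu {k : ℕ} (hk : k < 3) (d z : ℤ) :
    (cubicRecurrence (3 * (z : ℚ)) (-3 * (z : ℚ) ^ 2) ((z : ℚ) ^ 3 + (d : ℚ) ^ 2)).IsSolution
      fun n => (mu 3 k d z (n + 1) : ℚ) := by
  refine cubicRecurrence_isSolution_iff.2 fun n => ?_
  have h := congrArg (Int.cast (R := ℚ)) (mu_three_add_three hk d z (n + 1))
  push_cast at h
  linear_combination h

lemma cubicRecurrence_isSolution_mul_bcf {p q : ℕ → ℚ} {x0 x1 x2 a b c : ℚ} {K : ℕ → ℚ}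
    (hp : ∀ n, K (n + 3) * p (n + 3) = a * K (n + 2))
    (hq : ∀ n, K (n + 3) * q (n + 3) = b * K (n + 1)) (hK : ∀ n, K (n + 3) = c * K n) :
    (cubicRecurrence a b c).IsSolution fun n => K n * bcf p q x0 x1 x2 (n + 2) := by
  refine cubicRecurrence_isSolution_iff.2 fun n => ?_
  show K (n + 3) * (p (n + 3) * bcf p q x0 x1 x2 (n + 4) + q (n + 3) * bcf p q x0 x1 x2 (n + 3)
    + bcf p q x0 x1 x2 (n + 2)) = _
  linear_combination bcf p q x0 x1 x2 (n + 4) * hp n + bcf p q x0 x1 x2 (n + 3) * hq n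
    + bcf p q x0 x1 x2 (n + 2) * hK n

def bcfScale (d z : ℚ) (n : ℕ) : ℚ :=
  (if n % 3 = 1 then d else 1) * (z ^ 3 + d ^ 2) ^ ((n + 1) / 3)

section BcfScale

variable {d z : ℚ}

lemma bcfScale_add_three (d z : ℚ) (n : ℕ) :
    bcfScale d z (n + 3) = (z ^ 3 + d ^ 2) * bcfScale d z n := by
  rw [bcfScale, bcfScale, show (n + 3) % 3 = n % 3 by omega,
    show (n + 3 + 1) / 3 = (n + 1) / 3 + 1 by omega, pow_succ]
  ring

lemma bcfScale_ne_zero (hd : d ≠ 0) (hW : z ^ 3 + d ^ 2 ≠ 0) (n : ℕ) : bcfScale d z n ≠ 0 :=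
  mul_ne_zero (by split_ifs <;> simp [hd]) (pow_ne_zero _ hW)

lemma bcfScale_mul_p (hd : d ≠ 0) (hW : z ^ 3 + d ^ 2 ≠ 0) {p : ℕ → ℚ}
    (hp2 : ∀ n, 2 ≤ n → n % 3 = 2 → p n = 3 * d * z / (z ^ 3 + d ^ 2))
    (hp3 : ∀ n, 2 ≤ n → n % 3 = 0 → p n = 3 * z)
    (hp4 : ∀ n, 2 ≤ n → n % 3 = 1 → p n = 3 * z / d) (n : ℕ) :
    bcfScale d z (n + 3) * p (n + 3) = 3 * z * bcfScale d z (n + 2) := by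
  unfold bcfScale
  rcases (by omega : n % 3 = 0 ∨ n % 3 = 1 ∨ n % 3 = 2) with h | h | h
  · rw [hp3 _ (by omega) (by omega), if_neg (by omega), if_neg (by omega),
      show (n + 3 + 1) / 3 = (n + 2 + 1) / 3 by omega]
    ring
  · rw [hp4 _ (by omega) (by omega), if_pos (by omega), if_neg (by omega),
      show (n + 3 + 1) / 3 = (n + 2 + 1) / 3 by omega]
    field_simp
  · rw [hp2 _ (by omega) (by omega), if_neg (by omega), if_pos (by omega),
      show (n + 3 + 1) / 3 = (n + 2 + 1) / 3 + 1 by omega, pow_succ]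
    field_simp

lemma bcfScale_mul_q (hd : d ≠ 0) (hW : z ^ 3 + d ^ 2 ≠ 0) {q : ℕ → ℚ}
    (hq2 : ∀ n, 2 ≤ n → n % 3 = 2 → q n = -(3 * z ^ 2) / (z ^ 3 + d ^ 2))
    (hq3 : ∀ n, 2 ≤ n → n % 3 = 0 → q n = -(3 * d * z ^ 2) / (z ^ 3 + d ^ 2))
    (hq4 : ∀ n, 2 ≤ n → n % 3 = 1 → q n = -(3 * z ^ 2) / d) (n : ℕ) :
    bcfScale d z (n + 3) * q (n + 3) = -3 * z ^ 2 * bcfScale d z (n + 1) := by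
  unfold bcfScale
  rcases (by omega : n % 3 = 0 ∨ n % 3 = 1 ∨ n % 3 = 2) with h | h | h
  · rw [hq3 _ (by omega) (by omega), if_neg (by omega), if_pos (by omega),
      show (n + 3 + 1) / 3 = (n + 1 + 1) / 3 + 1 by omega, pow_succ]
    field_simp
  · rw [hq4 _ (by omega) (by omega), if_pos (by omega), if_neg (by omega),
      show (n + 3 + 1) / 3 = (n + 1 + 1) / 3 by omega]
    field_simp
  · rw [hq2 _ (by omega) (by omega), if_neg (by omega), if_neg (by omega),
      show (n + 3 + 1) / 3 = (n + 1 + 1) / 3 + 1 by omega, pow_succ]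
    field_simp

end BcfScale

/-- The convergents of the periodic bifurcating continued fraction
`[{z, 2z/d, repeat(3dz/(z³+d²), 3z, 3z/d)}, {0, −z²/d, repeat(−3z²/(z³+d²),
−3dz²/(z³+d²), −3z²/d)}]` are the ratios of the generalized Rédei polynomials:
`A_n/C_n = μ_{n+1}(3,0,d,z)/μ_{n+1}(3,2,d,z)` and
`B_n/C_n = μ_{n+1}(3,1,d,z)/μ_{n+1}(3,2,d,z)`. -/
theorem bcf_convergents_eq_mu_ratios (d z : ℤ) (hd : 1 ≤ d) (hz : 1 ≤ z)
    (p q : ℕ → ℚ)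
    (hp0 : p 0 = (z : ℚ))
    (hp1 : p 1 = 2 * (z : ℚ) / (d : ℚ))
    (hq0 : q 0 = 0)
    (hq1 : q 1 = -(z : ℚ) ^ 2 / (d : ℚ))
    (hp2 : ∀ n, 2 ≤ n → n % 3 = 2 →
      p n = 3 * (d : ℚ) * (z : ℚ) / ((z : ℚ) ^ 3 + (d : ℚ) ^ 2))
    (hq2 : ∀ n, 2 ≤ n → n % 3 = 2 →
      q n = -(3 * (z : ℚ) ^ 2) / ((z : ℚ) ^ 3 + (d : ℚ) ^ 2))
    (hp3 : ∀ n, 2 ≤ n → n % 3 = 0 → p n = 3 * (z : ℚ))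
    (hq3 : ∀ n, 2 ≤ n → n % 3 = 0 →
      q n = -(3 * (d : ℚ) * (z : ℚ) ^ 2) / ((z : ℚ) ^ 3 + (d : ℚ) ^ 2))
    (hp4 : ∀ n, 2 ≤ n → n % 3 = 1 → p n = 3 * (z : ℚ) / (d : ℚ))
    (hq4 : ∀ n, 2 ≤ n → n % 3 = 1 → q n = -(3 * (z : ℚ) ^ 2) / (d : ℚ))
    (n : ℕ) :
    mu 3 2 d z (n + 1) ≠ 0 ∧
    bcf p q 0 0 1 (n + 2) ≠ 0 ∧
    bcf p q 0 1 (p 0) (n + 2) / bcf p q 0 0 1 (n + 2)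
      = (mu 3 0 d z (n + 1) : ℚ) / (mu 3 2 d z (n + 1) : ℚ) ∧
    bcf p q 1 0 (q 0) (n + 2) / bcf p q 0 0 1 (n + 2)
      = (mu 3 1 d z (n + 1) : ℚ) / (mu 3 2 d z (n + 1) : ℚ) := by
  have hd0 : (d : ℚ) ≠ 0 := by positivity
  have hW : (z : ℚ) ^ 3 + (d : ℚ) ^ 2 ≠ 0 := by positivity
  have hsol : ∀ x0 x1 x2, (cubicRecurrence (3 * (z : ℚ)) (-3 * (z : ℚ) ^ 2)
      ((z : ℚ) ^ 3 + (d : ℚ) ^ 2)).IsSolution fun n => bcfScale d z n * bcf p q x0 x1 x2 (n + 2) :=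
    fun _ _ _ => cubicRecurrence_isSolution_mul_bcf (bcfScale_mul_p hd0 hW hp2 hp3 hp4)
      (bcfScale_mul_q hd0 hW hq2 hq3 hq4) (bcfScale_add_three d z)
  have hA := cubicRecurrence_eq_of_init (hsol 0 1 (p 0))
    (cubicRecurrence_isSolution_mu (k := 0) (by norm_num) d z) ?_ ?_ ?_
  have hB := cubicRecurrence_eq_of_init (hsol 1 0 (q 0))
    (cubicRecurrence_isSolution_mu (k := 1) (by norm_num) d z) ?_ ?_ ?_
  have hC := cubicRecurrence_eq_of_init (hsol 0 0 1)
    (cubicRecurrence_isSolution_mu (k := 2) (by norm_num) d z) ?_ ?_ ?_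
  · have hK := bcfScale_ne_zero hd0 hW n
    have hμ : (0 : ℚ) < mu 3 2 d z (n + 1) := by
      have : 0 < mu 3 2 d z (n + 1) := mu_sub_one_pos (e := 3) (by norm_num) (by omega) (by omega) n
      exact_mod_cast this
    have eA := congrFun hA n
    have eB := congrFun hB n
    have eC := congrFun hC n
    have hCne : bcf p q 0 0 1 (n + 2) ≠ 0 := fun h => by
      simp only [h, mul_zero] at eC
      exact hμ.ne eC
    refine ⟨by exact_mod_cast hμ.ne', hCne, ?_, ?_⟩
    · rw [← eA, ← eC, mul_div_mul_left _ _ hK]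
    · rw [← eB, ← eC, mul_div_mul_left _ _ hK]
  -- the nine initial values `K_n X_n = μ_{n+1}` for `n < 3`
  all_goals
    simp [bcf, bcfScale, mu, sum_range_succ, Nat.choose, hp0, hq0, hp1, hq1, hp2 2 le_rfl rfl,
      hq2 2 le_rfl rfl] <;> field_simp <;> ring
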